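/- arXiv:1702.04025 — 2 statements merged into one kernel-verified Lean document; each statement's English description precedes it below -/
import Mathlib

section
/- Full FWER control theorem: Consider T subfamilies, subfamily t containing m_t hypotheses with p-values P(t,1),...,P(t,m_t) ∈ [0,1]. Each hypothesis is either true or false; the vector of p-values of true hypotheses is independent of that of false hypotheses, and conditionally on the false p-values, each true p-value P(t,j) satisfies Pr(P(t,j) ≤ a) ≤ a for all a ∈ [0,1]. The sequential procedure sets α(1) = α, and at step t, if t ≤ T and m_t · min_j P(t,j) ≤ α(t), rejects the hypothesis achieving the minimum and sets α(t+1) = α(t) − (m_t − 1)·min_j P(t,j); otherwise it stops. Then conditionally on the false p-values, the probability that the procedure ever rejects a true hypothesis is at most α. -/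
open MeasureTheory Finset

attribute [local instance] Classical.propDecidable

/-- State of the sequential multiple testing procedure after `t` steps:
`(state t).1` is the adjusted significance level `α(t+1)` (0-indexed) and
`(state t).2` is the proposition that the procedure is still running (i.e. it
has made a rejection at every step so far).  `minp t` is the minimum p-value
in subfamily `t`, `m t` the size of subfamily `t`. -/
noncomputable def smtState {Ω : Type*} (m : ℕ → ℕ) (minp : ℕ → Ω → ℝ) (α : ℝ) :
    ℕ → Ω → ℝ × Prop
  | 0, _ => (α, True)
  | (t + 1), ω =>
      let prev := smtState m minp α t ω
      (if prev.2 ∧ (m t : ℝ) * minp t ω ≤ prev.1 then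
          prev.1 - ((m t : ℝ) - 1) * minp t ω
        else prev.1,
       prev.2 ∧ (m t : ℝ) * minp t ω ≤ prev.1)

/-- The key deterministic ("real analysis") lemma behind Theorem 1.
`c t` is the minimal false-null p-value in family `t` (`1` if none),
`n t` the number of true nulls, `A t` the running level, `b` the bound on
the minimal true-null p-value needed for a first false rejection at `t`. -/
theorem smt_sum_le {T : ℕ} (m n : ℕ → ℕ) (c A : ℕ → ℝ) (α : ℝ)
    (hm : ∀ t, 0 < m t) (hc0 : ∀ t, 0 ≤ c t) (hc1 : ∀ t, c t ≤ 1)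
    (hn : ∀ t, (n t : ℝ) ≤ (m t : ℝ) - 1 ∨ c t = 1)
    (hnm : ∀ t, n t ≤ m t)
    (hA0 : A 0 = α) (hAs : ∀ t, A (t + 1) = A t - ((m t : ℝ) - 1) * c t)
    (hα0 : 0 ≤ α) (hα1 : α < 1) :
    ∀ k s, T ≤ s + k → (∀ l < s, (m l : ℝ) * c l ≤ A l) →
      (∑ t ∈ Finset.Ico s T,
        if (∀ l < t, (m l : ℝ) * c l ≤ A l) then (n t : ℝ) * min (c t) (A t / m t) else 0)
        ≤ A s := by
  have hA_nonneg : ∀ s, (∀ l < s, (m l : ℝ) * c l ≤ A l) → 0 ≤ A s := by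
    intro s
    induction s with
    | zero => intro _; rw [hA0]; exact hα0
    | succ s ih =>
      intro h
      have hs : (m s : ℝ) * c s ≤ A s := h s (Nat.lt_succ_self s)
      have hm1 : (1 : ℝ) ≤ (m s : ℝ) := by exact_mod_cast hm s
      have : A (s + 1) = (A s - (m s : ℝ) * c s) + c s := by rw [hAs]; ring
      rw [this]
      have := hc0 s
      nlinarith
  have hA_le : ∀ s, A s ≤ α := by
    intro s
    induction s with
    | zero => rw [hA0]
    | succ s ih =>
      rw [hAs]
      have hm1 : (1 : ℝ) ≤ (m s : ℝ) := by exact_mod_cast hm s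
      have := hc0 s
      nlinarith
  intro k
  induction k with
  | zero =>
    intro s hT h
    rw [Finset.Ico_eq_empty (by omega)]
    simpa using hA_nonneg s h
  | succ k ih =>
    intro s hT h
    by_cases hsT : T ≤ s
    · rw [Finset.Ico_eq_empty (by omega)]
      simpa using hA_nonneg s h
    push_neg at hsT
    rw [Finset.sum_eq_sum_Ico_succ_bot hsT]
    rw [if_pos h]
    have hAs0 : 0 ≤ A s := hA_nonneg s h
    have hms : (0 : ℝ) < (m s : ℝ) := by exact_mod_cast hm s
    have hb0 : 0 ≤ min (c s) (A s / m s) := le_min (hc0 s) (div_nonneg hAs0 hms.le)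
    by_cases hc : (m s : ℝ) * c s ≤ A s
    · have h' : ∀ l < s + 1, (m l : ℝ) * c l ≤ A l := by
        intro l hl
        rcases Nat.lt_succ_iff_lt_or_eq.mp hl with hl | rfl
        · exact h l hl
        · exact hc
      have hsum := ih (s + 1) (by omega) h'
      have hterm : (n s : ℝ) * min (c s) (A s / m s) ≤ ((m s : ℝ) - 1) * c s := by
        rcases hn s with hns | hcs
        · calc (n s : ℝ) * min (c s) (A s / m s) ≤ ((m s : ℝ) - 1) * min (c s) (A s / m s) :=
              mul_le_mul_of_nonneg_right hns hb0
          _ ≤ ((m s : ℝ) - 1) * c s := by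
              have hm1 : (1 : ℝ) ≤ (m s : ℝ) := by exact_mod_cast hm s
              exact mul_le_mul_of_nonneg_left (min_le_left _ _) (by linarith)
        · exfalso
          have hm1 : (1 : ℝ) ≤ (m s : ℝ) := by exact_mod_cast hm s
          have := hA_le s
          rw [hcs, mul_one] at hc
          linarith
      have := hAs s
      linarith
    · have hrest : (∑ t ∈ Finset.Ico (s + 1) T,
          if (∀ l < t, (m l : ℝ) * c l ≤ A l) then (n t : ℝ) * min (c t) (A t / m t) else 0)
          = 0 := by
        apply Finset.sum_eq_zero
        intro t ht
        rw [if_neg]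
        intro hall
        exact hc (hall s (Finset.mem_Ico.mp ht).1)
      rw [hrest, add_zero]
      calc (n s : ℝ) * min (c s) (A s / m s) ≤ (m s : ℝ) * min (c s) (A s / m s) := by
            apply mul_le_mul_of_nonneg_right _ hb0
            exact_mod_cast hnm s
        _ ≤ (m s : ℝ) * (A s / m s) := mul_le_mul_of_nonneg_left (min_le_right _ _) hms.le
        _ = A s := by field_simp

/-- Theorem 1 (FWER control).  Subfamily `t < T` has `m t ≥ 1` hypotheses with
p-values `P t j ∈ [0,1]`; `isTrue t j` designates the true null hypotheses.
Conditioning on the false-null p-values is modelled by taking the false-null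
p-values to be (conditionally) constant, while each true-null p-value is
super-uniform.  The procedure rejects at step `t` iff it is still running and
`m t · min_j P t j ≤ α(t)`, updating `α(t+1) = α(t) − (m t − 1)·min_j P t j`,
and the rejected hypothesis is one attaining the minimum p-value.  Then the
probability that some true null hypothesis is ever rejected is at most `α`. -/
theorem stmt_4 {Ω : Type*} [MeasurableSpace Ω] (μ : Measure Ω) [IsProbabilityMeasure μ]
    (T : ℕ) (m : ℕ → ℕ) (hm : ∀ t, 0 < m t)
    (P : (t : ℕ) → Fin (m t) → Ω → ℝ)
    (isTrue : (t : ℕ) → Fin (m t) → Prop)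
    (hrange : ∀ t j ω, P t j ω ∈ Set.Icc (0 : ℝ) 1)
    (hfalseConst : ∀ t j, ¬ isTrue t j → ∃ c : ℝ, ∀ ω, P t j ω = c)
    (htrueSuper : ∀ t j, isTrue t j →
      ∀ a ∈ Set.Icc (0 : ℝ) 1, μ {ω | P t j ω ≤ a} ≤ ENNReal.ofReal a)
    (α : ℝ) (hα : α ∈ Set.Icc (0 : ℝ) 1)
    (minp : ℕ → Ω → ℝ)
    (hminp : ∀ t ω, minp t ω = Finset.univ.inf'
      (Finset.univ_nonempty_iff.mpr ⟨⟨0, hm t⟩⟩) fun j => P t j ω) :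
    μ {ω | ∃ t < T, (smtState m minp α (t + 1) ω).2 ∧
        ∃ j, isTrue t j ∧ P t j ω = minp t ω} ≤ ENNReal.ofReal α := by
  obtain ⟨hα0, hα1⟩ := hα
  rcases eq_or_lt_of_le hα1 with hα1 | hα1
  · calc μ _ ≤ μ Set.univ := measure_mono (Set.subset_univ _)
      _ = 1 := measure_univ
      _ ≤ ENNReal.ofReal α := by rw [hα1]; simp
  -- α < 1 from here on
  have hΩ : Nonempty Ω := by
    by_contra h
    rw [not_nonempty_iff] at h
    have : μ Set.univ = 0 := by simp [Set.univ_eq_empty_iff.mpr h]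
    simp [measure_univ] at this
  obtain ⟨ω₀⟩ := hΩ
  have hne : ∀ t, (Finset.univ : Finset (Fin (m t))).Nonempty :=
    fun t => Finset.univ_nonempty_iff.mpr ⟨⟨0, hm t⟩⟩
  -- constants of false nulls, 1 for true nulls
  set cF : (t : ℕ) → Fin (m t) → ℝ :=
    fun t j => if h : isTrue t j then 1 else (hfalseConst t j h).choose with hcF_def
  have hcF_false : ∀ t j (h : ¬ isTrue t j) ω, P t j ω = cF t j := by
    intro t j h ω
    simp only [hcF_def, dif_neg h]
    exact (hfalseConst t j h).choose_spec ω
  have hcF0 : ∀ t j, 0 ≤ cF t j := by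
    intro t j
    by_cases h : isTrue t j
    · simp [hcF_def, h]
    · rw [← hcF_false t j h ω₀]; exact (hrange t j ω₀).1
  have hcF1 : ∀ t j, cF t j ≤ 1 := by
    intro t j
    by_cases h : isTrue t j
    · simp [hcF_def, h]
    · rw [← hcF_false t j h ω₀]; exact (hrange t j ω₀).2
  set c : ℕ → ℝ := fun t => Finset.univ.inf' (hne t) (cF t) with hc_def
  have hc0 : ∀ t, 0 ≤ c t := by
    intro t
    exact Finset.le_inf' _ _ fun j _ => hcF0 t j
  have hc1 : ∀ t, c t ≤ 1 := by
    intro t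
    obtain ⟨j, -, hj⟩ := Finset.exists_mem_eq_inf' (hne t) (cF t)
    exact le_of_eq_of_le hj (hcF1 t j)
  -- minp ≤ c
  have hminp_le : ∀ t ω, minp t ω ≤ c t := by
    intro t ω
    rw [hminp]
    apply Finset.le_inf'
    intro j _
    calc Finset.univ.inf' (Finset.univ_nonempty_iff.mpr ⟨⟨0, hm t⟩⟩) (fun j => P t j ω)
        ≤ P t j ω := Finset.inf'_le _ (Finset.mem_univ j)
      _ ≤ cF t j := by
          by_cases h : isTrue t j
          · simp only [hcF_def, dif_pos h]; exact (hrange t j ω).2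
          · rw [hcF_false t j h ω]
  -- if no true null attains the min, then minp = c
  have hminp_eq : ∀ t ω, ¬ (∃ j, isTrue t j ∧ P t j ω = minp t ω) → minp t ω = c t := by
    intro t ω hno
    refine le_antisymm (hminp_le t ω) ?_
    obtain ⟨j, -, hj⟩ := Finset.exists_mem_eq_inf'
      (Finset.univ_nonempty_iff.mpr ⟨⟨0, hm t⟩⟩) (fun j => P t j ω)
    have hjfalse : ¬ isTrue t j := by
      intro htj
      exact hno ⟨j, htj, by rw [hminp]; exact hj.symm⟩
    have : minp t ω = cF t j := by
      rw [hminp, hj, hcF_false t j hjfalse ω]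
    rw [this]
    exact Finset.inf'_le _ (Finset.mem_univ j)
  -- deterministic level sequence
  set A : ℕ → ℝ := fun t => α - ∑ l ∈ Finset.range t, ((m l : ℝ) - 1) * c l with hA_def
  have hA0 : A 0 = α := by simp [hA_def]
  have hAs : ∀ t, A (t + 1) = A t - ((m t : ℝ) - 1) * c t := by
    intro t
    simp only [hA_def, Finset.sum_range_succ]
    ring
  set cond : ℕ → Prop := fun t => ∀ l < t, (m l : ℝ) * c l ≤ A l with hcond_def
  -- the running-state lemma
  have hmono : ∀ t ω, (smtState m minp α (t + 1) ω).2 → (smtState m minp α t ω).2 := by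
    intro t ω h
    exact h.1
  have L1 : ∀ t ω, (∀ l < t, ¬ (∃ j, isTrue l j ∧ P l j ω = minp l ω)) →
      (smtState m minp α t ω).2 →
      (smtState m minp α t ω).1 = A t ∧ cond t := by
    intro t
    induction t with
    | zero =>
      intro ω _ _
      constructor
      · simp [smtState, hA0]
      · intro l hl; omega
    | succ t ih =>
      intro ω hno hrun
      have hrun' : (smtState m minp α t ω).2 ∧ (m t : ℝ) * minp t ω ≤
          (smtState m minp α t ω).1 := hrun
      obtain ⟨hprev, hrej⟩ := hrun'
      obtain ⟨hA_eq, hcond⟩ := ih ω (fun l hl => hno l (Nat.lt_succ_of_lt hl)) hprev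
      have hmt : minp t ω = c t := hminp_eq t ω (hno t (Nat.lt_succ_self t))
      have hrej' : (m t : ℝ) * c t ≤ A t := by rw [← hmt, ← hA_eq]; exact hrej
      constructor
      · show (if (smtState m minp α t ω).2 ∧ (m t : ℝ) * minp t ω ≤ (smtState m minp α t ω).1
            then (smtState m minp α t ω).1 - ((m t : ℝ) - 1) * minp t ω
            else (smtState m minp α t ω).1) = A (t + 1)
        rw [if_pos ⟨hprev, hrej⟩, hA_eq, hmt, hAs]
      · intro l hl
        rcases Nat.lt_succ_iff_lt_or_eq.mp hl with hl | rfl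
        · exact hcond l hl
        · exact hrej'
  set n : ℕ → ℕ := fun t => (Finset.univ.filter (fun j => isTrue t j)).card with hn_def
  set b : ℕ → ℝ := fun t => min (c t) (A t / m t) with hb_def
  -- inclusion into a finite union
  have hsub : {ω | ∃ t < T, (smtState m minp α (t + 1) ω).2 ∧
        ∃ j, isTrue t j ∧ P t j ω = minp t ω} ⊆
      ⋃ t ∈ Finset.range T, ⋃ j ∈ (Finset.univ : Finset (Fin (m t))),
        {ω | (cond t ∧ isTrue t j) ∧ P t j ω ≤ b t} := by
    intro ω hω
    have hex : ∃ t, t < T ∧ (smtState m minp α (t + 1) ω).2 ∧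
        ∃ j, isTrue t j ∧ P t j ω = minp t ω := by
      obtain ⟨t, ht, h⟩ := hω
      exact ⟨t, ht, h⟩
    classical
    set t₀ := Nat.find hex with ht₀_def
    obtain ⟨ht₀T, hrun, j, hj, hjeq⟩ := Nat.find_spec hex
    have hmono' : ∀ l, l ≤ t₀ → (smtState m minp α (l + 1) ω).2 := by
      intro l hl
      have : ∀ k, (smtState m minp α (t₀ + 1 - k) ω).2 := by
        intro k
        induction k with
        | zero => simpa using hrun
        | succ k ih =>
          rcases Nat.lt_or_ge (t₀ + 1) (k + 1) with h | h
          · have e : t₀ + 1 - (k + 1) = 0 := by omega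
            rw [e]; trivial
          · have e : t₀ + 1 - k = (t₀ + 1 - (k + 1)) + 1 := by omega
            rw [e] at ih
            exact hmono _ ω ih
      have := this (t₀ - l)
      have e : t₀ + 1 - (t₀ - l) = l + 1 := by omega
      rwa [e] at this
    have hno : ∀ l < t₀, ¬ (∃ j, isTrue l j ∧ P l j ω = minp l ω) := by
      intro l hl hcontra
      exact Nat.find_min hex hl ⟨by omega, hmono' l (by omega), hcontra⟩
    obtain ⟨hA_eq, hcond⟩ := L1 t₀ ω hno (hmono _ ω hrun)
    have hrej : (m t₀ : ℝ) * minp t₀ ω ≤ A t₀ := by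
      rw [← hA_eq]; exact hrun.2
    have hmpos : (0 : ℝ) < (m t₀ : ℝ) := by exact_mod_cast hm t₀
    have hPle : P t₀ j ω ≤ b t₀ := by
      rw [hjeq]
      apply le_min (hminp_le t₀ ω)
      rw [le_div_iff₀ hmpos, mul_comm]
      exact hrej
    simp only [Set.mem_iUnion]
    exact ⟨t₀, Finset.mem_range.mpr ht₀T, j, Finset.mem_univ j,
      ⟨hcond, hj⟩, hPle⟩
  have hA_nonneg : ∀ s, cond s → 0 ≤ A s := by
    intro s
    induction s with
    | zero => intro _; rw [hA0]; exact hα0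
    | succ s ih =>
      intro h
      have hs : (m s : ℝ) * c s ≤ A s := h s (Nat.lt_succ_self s)
      have hm1 : (1 : ℝ) ≤ (m s : ℝ) := by exact_mod_cast hm s
      have e : A (s + 1) = (A s - (m s : ℝ) * c s) + c s := by rw [hAs]; ring
      rw [e]
      have := hc0 s
      nlinarith
  -- measure bound
  have hb01 : ∀ t, cond t → b t ∈ Set.Icc (0 : ℝ) 1 := by
    intro t hcond
    constructor
    · exact le_min (hc0 t) (div_nonneg (hA_nonneg t hcond)
        (by positivity))
    · exact le_trans (min_le_left _ _) (hc1 t)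
  have key : μ {ω | ∃ t < T, (smtState m minp α (t + 1) ω).2 ∧
        ∃ j, isTrue t j ∧ P t j ω = minp t ω} ≤
      ∑ t ∈ Finset.range T, ∑ j ∈ (Finset.univ : Finset (Fin (m t))),
        μ {ω | (cond t ∧ isTrue t j) ∧ P t j ω ≤ b t} := by
    calc μ _ ≤ μ (⋃ t ∈ Finset.range T, ⋃ j ∈ (Finset.univ : Finset (Fin (m t))),
          {ω | (cond t ∧ isTrue t j) ∧ P t j ω ≤ b t}) := measure_mono hsub
      _ ≤ ∑ t ∈ Finset.range T, μ (⋃ j ∈ (Finset.univ : Finset (Fin (m t))),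
          {ω | (cond t ∧ isTrue t j) ∧ P t j ω ≤ b t}) := measure_biUnion_finset_le _ _
      _ ≤ _ := Finset.sum_le_sum fun t _ => measure_biUnion_finset_le _ _
  have hterm : ∀ t, ∀ j : Fin (m t),
      μ {ω | (cond t ∧ isTrue t j) ∧ P t j ω ≤ b t} ≤
      if cond t ∧ isTrue t j then ENNReal.ofReal (b t) else 0 := by
    intro t j
    by_cases h : cond t ∧ isTrue t j
    · rw [if_pos h]
      calc μ {ω | (cond t ∧ isTrue t j) ∧ P t j ω ≤ b t}
          ≤ μ {ω | P t j ω ≤ b t} := measure_mono fun ω hω => hω.2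
        _ ≤ ENNReal.ofReal (b t) := htrueSuper t j h.2 (b t) (hb01 t h.1)
    · rw [if_neg h]
      have : {ω | (cond t ∧ isTrue t j) ∧ P t j ω ≤ b t} = ∅ := by
        ext ω; simp only [Set.mem_setOf_eq, Set.mem_empty_iff_false, iff_false]
        exact fun hω => h hω.1
      rw [this]; simp
  have key2 : μ {ω | ∃ t < T, (smtState m minp α (t + 1) ω).2 ∧
        ∃ j, isTrue t j ∧ P t j ω = minp t ω} ≤
      ∑ t ∈ Finset.range T, ENNReal.ofReal
        (if cond t then (n t : ℝ) * b t else 0) := by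
    refine le_trans key (Finset.sum_le_sum fun t _ => ?_)
    calc (∑ j ∈ (Finset.univ : Finset (Fin (m t))),
          μ {ω | (cond t ∧ isTrue t j) ∧ P t j ω ≤ b t})
        ≤ ∑ j ∈ (Finset.univ : Finset (Fin (m t))),
          (if cond t ∧ isTrue t j then ENNReal.ofReal (b t) else 0) :=
          Finset.sum_le_sum fun j _ => hterm t j
      _ = ENNReal.ofReal (if cond t then (n t : ℝ) * b t else 0) := by
          by_cases hct : cond t
          · have hif : ∀ j : Fin (m t), (if cond t ∧ isTrue t j then ENNReal.ofReal (b t) else 0)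
                = (if isTrue t j then ENNReal.ofReal (b t) else 0) := by
              intro j
              by_cases hj : isTrue t j
              · rw [if_pos ⟨hct, hj⟩, if_pos hj]
              · rw [if_neg (fun h => hj h.2), if_neg hj]
            rw [Finset.sum_congr rfl fun j _ => hif j, if_pos hct,
              ← Finset.sum_filter, Finset.sum_const, nsmul_eq_mul,
              ENNReal.ofReal_mul (Nat.cast_nonneg _), ENNReal.ofReal_natCast]
          · rw [if_neg hct, ENNReal.ofReal_zero]
            apply Finset.sum_eq_zero
            intro j _
            exact if_neg (fun h => hct h.1)
  refine le_trans key2 ?_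
  rw [← ENNReal.ofReal_sum_of_nonneg]
  · apply ENNReal.ofReal_le_ofReal
    have hn_le : ∀ t, (n t : ℝ) ≤ (m t : ℝ) - 1 ∨ c t = 1 := by
      intro t
      by_cases h : ∃ j : Fin (m t), ¬ isTrue t j
      · left
        obtain ⟨j, hj⟩ := h
        have hcard : n t ≤ m t - 1 := by
          have hsub : Finset.univ.filter (fun j => isTrue t j) ⊆ Finset.univ.erase j := by
            intro x hx
            rw [Finset.mem_erase]
            refine ⟨?_, Finset.mem_univ x⟩
            rintro rfl
            exact hj (Finset.mem_filter.mp hx).2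
          have := Finset.card_le_card hsub
          rwa [Finset.card_erase_of_mem (Finset.mem_univ j), Finset.card_univ,
            Fintype.card_fin] at this
        have h1 : 1 ≤ m t := hm t
        have : (n t : ℝ) ≤ ((m t - 1 : ℕ) : ℝ) := by exact_mod_cast hcard
        rw [Nat.cast_sub h1] at this
        simpa using this
      · right
        push_neg at h
        refine le_antisymm (hc1 t) ?_
        apply Finset.le_inf'
        intro j _
        simp [hcF_def, h j]
    have hnm : ∀ t, n t ≤ m t := by
      intro t
      calc n t ≤ (Finset.univ : Finset (Fin (m t))).card := Finset.card_filter_le _ _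
        _ = m t := by rw [Finset.card_univ, Fintype.card_fin]
    have := smt_sum_le m n c A α hm hc0 hc1 hn_le hnm hA0 hAs hα0 hα1 T 0 (le_of_eq (Nat.zero_add T).symm)
      (fun l hl => absurd hl (Nat.not_lt_zero l))
    rw [Finset.range_eq_Ico]
    simpa [hb_def, hcond_def, hA0] using this.trans_eq hA0
  · intro t _
    by_cases hct : cond t
    · rw [if_pos hct]
      have := (hb01 t hct).1
      positivity
    · rw [if_neg hct]
end

section
/- Failure of FWER control without independence: suppose hypotheses A (false) and B (true) are functions of the same random outcome with rejection regions that partition the sample space: B is falsely rejected with probability p_B ≤ α/2, and on the complementary event A is rejected with a p-value P_A; conditional on A's rejection, a second true hypothesis C is tested at level α − P_A. If C's rejection probability at level a equals a (maximally powerful), then the total FWER equals p_B + E[(α − P_A)·1{A rejected}], which can exceed α. -/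
/-!
Take `P_A ≡ 0`, so that `C` is tested at the full level `α` on the event `A = Bᶜ` where `A` is
rejected. If `C` rejects with conditional probability exactly `α` there, the familywise error is
`p_B + α (1 - p_B) = α + p_B (1 - α)`, which exceeds `α` as soon as `p_B > 0`. The uniform
distribution on `(0, 1]` with `α = 1/2`, `B = (0, 1/4]` and `C = (1/4, 5/8]` realises this.
-/

open MeasureTheory Set

section FamilywiseError

variable {Ω : Type*} [MeasurableSpace Ω] (μ : Measure Ω) {B C : Set Ω}

theorem measureReal_union_compl_inter_of_subset [IsFiniteMeasure μ] (hC : MeasurableSet C)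
    (hCB : C ⊆ Bᶜ) : μ.real (B ∪ (Bᶜ ∩ C)) = μ.real B + μ.real C := by
  rw [inter_eq_right.mpr hCB, measureReal_union (disjoint_compl_right.mono_right hCB) hC]

theorem lt_measureReal_union_compl_inter [IsProbabilityMeasure μ] {α : ℝ} (hα : α < 1)
    (hB : MeasurableSet B) (hC : MeasurableSet C) (hCB : C ⊆ Bᶜ) (hB_pos : 0 < μ.real B)
    (hC_eq : μ.real C = α * μ.real Bᶜ) : α < μ.real (B ∪ (Bᶜ ∩ C)) := by
  rw [measureReal_union_compl_inter_of_subset μ hC hCB, hC_eq, measureReal_compl hB,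
    probReal_univ]
  nlinarith

end FamilywiseError

instance : IsProbabilityMeasure (volume.restrict (Ioc (0 : ℝ) 1)) :=
  ⟨by simp [Real.volume_Ioc]⟩

theorem measureReal_restrict_Ioc_zero_one {a b : ℝ} (ha : 0 ≤ a) (hab : a ≤ b) (hb : b ≤ 1) :
    (volume.restrict (Ioc (0 : ℝ) 1)).real (Ioc a b) = b - a := by
  rw [measureReal_restrict_apply measurableSet_Ioc, Ioc_inter_Ioc, max_eq_left ha,
    min_eq_left hb, Real.volume_real_Ioc_of_le hab]

/-- Failure of FWER control without independence: there is a probability space with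
events `Brej` (false rejection of the true hypothesis B) and `Arej` (rejection of
the false hypothesis A) partitioning the sample space, a p-value `PA` for A taking
values in `[0, α]` on `Arej`, and a rejection event `Crej` for the true hypothesis
C tested at the adjusted level `α − PA` whose conditional rejection probability is
maximal (`μ(Arej ∩ Crej) = ∫_{Arej} (α − PA) dμ`), such that `μ(Brej) ≤ α/2` but the
total familywise error `μ(Brej ∪ (Arej ∩ Crej)) = μ(Brej) + ∫_{Arej} (α − PA) dμ`
exceeds `α`. -/
theorem stmt_13 :
    ∃ (Ω : Type) (_ : MeasurableSpace Ω) (μ : Measure Ω) (_ : IsProbabilityMeasure μ)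
      (α : ℝ) (Brej Arej Crej : Set Ω) (PA : Ω → ℝ),
      α ∈ Set.Ioo (0 : ℝ) 1 ∧
      MeasurableSet Brej ∧ MeasurableSet Arej ∧ MeasurableSet Crej ∧
      Brej ∩ Arej = ∅ ∧ Brej ∪ Arej = Set.univ ∧
      (μ Brej).toReal ≤ α / 2 ∧
      (∀ ω ∈ Arej, 0 ≤ PA ω ∧ PA ω ≤ α) ∧
      (μ (Arej ∩ Crej)).toReal = ∫ ω in Arej, (α - PA ω) ∂μ ∧
      (μ (Brej ∪ (Arej ∩ Crej))).toReal
        = (μ Brej).toReal + ∫ ω in Arej, (α - PA ω) ∂μ ∧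
      α < (μ (Brej ∪ (Arej ∩ Crej))).toReal := by
  set μ := volume.restrict (Ioc (0 : ℝ) 1)
  set B := Ioc (0 : ℝ) (1 / 4)
  set C := Ioc (1 / 4 : ℝ) (5 / 8)
  have hCB : C ⊆ Bᶜ := fun x hx hxB => (hx.1.trans_le hxB.2).false
  have hB : μ.real B = 1 / 4 := by
    rw [measureReal_restrict_Ioc_zero_one] <;> norm_num
  have hC : μ.real C = 1 / 2 * μ.real Bᶜ := by
    rw [measureReal_compl measurableSet_Ioc, probReal_univ, hB,
      measureReal_restrict_Ioc_zero_one] <;> norm_num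
  have hC_int : μ.real C = ∫ _ in Bᶜ, (1 / 2 - 0 : ℝ) ∂μ := by
    rw [setIntegral_const, hC, smul_eq_mul, sub_zero, mul_comm]
  refine ⟨ℝ, _, μ, inferInstance, 1 / 2, B, Bᶜ, C, fun _ => 0, by norm_num, measurableSet_Ioc,
    measurableSet_Ioc.compl, measurableSet_Ioc, inter_compl_self B, union_compl_self B,
    hB.trans_le (by norm_num), fun _ _ => by norm_num, ?_, ?_, ?_⟩
  · rwa [inter_eq_right.mpr hCB]
  · exact (measureReal_union_compl_inter_of_subset μ measurableSet_Ioc hCB).trans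
      (congrArg _ hC_int)
  · exact lt_measureReal_union_compl_inter μ (by norm_num) measurableSet_Ioc measurableSet_Ioc
      hCB (by norm_num [hB]) hC
end
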